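/- arXiv:2106.06946 — 3 statements merged into one kernel-verified Lean document; each statement's English description precedes it below -/
import Mathlib

section
/- Let d, m ≥ 1, let F : ℝ^d → {1,…,m} be a measurable classifier, let σ_ε > 0, and let ε be distributed according to the isotropic Gaussian measure N(0, σ_ε² I) on ℝ^d (the d coordinates are i.i.d. N(0, σ_ε²)). Fix x ∈ ℝ^d, a class c_A ∈ {1,…,m}, and numbers p̲_A, p̄_B ∈ (0,1) such that P_ε(F(x+ε) = c_A) ≥ p̲_A ≥ p̄_B ≥ max_{c ≠ c_A} P_ε(F(x+ε) = c). Set R = (σ_ε/2)·(Φ⁻¹(p̲_A) − Φ⁻¹(p̄_B)). Then for every δ ∈ ℝ^d with ‖δ‖₂ < R and every class c ≠ c_A, one has P_ε(F(x+δ+ε) = c_A) > P_ε(F(x+δ+ε) = c); that is, the smoothed classifier G satisfies G(x+δ) = c_A. -/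
open MeasureTheory ProbabilityTheory Set

open Real
open scoped ENNReal NNReal

set_option maxHeartbeats 1000000

/-- Neyman–Pearson core inequality. -/
lemma np_core {α : Type*} [MeasurableSpace α] (μ : Measure α) [IsFiniteMeasure μ]
    (g : α → ℝ≥0∞) (hg : Measurable g) (k : ℝ≥0∞)
    (H A : Set α) (hH : MeasurableSet H) (hA : MeasurableSet A)
    (h1 : ∀ e ∈ H, g e ≤ k) (h2 : ∀ e ∉ H, k ≤ g e)
    (hle : μ H ≤ μ A) :
    μ.withDensity g H ≤ μ.withDensity g A := by
  have hAH : μ (H \ A) ≤ μ (A \ H) := by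
    have h1' : μ (H ∩ A) + μ (H \ A) = μ H := measure_inter_add_diff H hA
    have h2' : μ (A ∩ H) + μ (A \ H) = μ A := measure_inter_add_diff A hH
    have hca : μ (H ∩ A) = μ (A ∩ H) := by rw [Set.inter_comm]
    have hfin : μ (H ∩ A) ≠ ⊤ := (measure_lt_top μ _).ne
    refine (ENNReal.add_le_add_iff_left hfin).mp ?_
    calc μ (H ∩ A) + μ (H \ A) = μ H := h1'
      _ ≤ μ A := hle
      _ = μ (H ∩ A) + μ (A \ H) := by rw [hca]; exact h2'.symm
  rw [withDensity_apply _ hH, withDensity_apply _ hA,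
    ← lintegral_inter_add_diff g H hA, ← lintegral_inter_add_diff g A hH]
  refine add_le_add (le_of_eq (by rw [Set.inter_comm])) ?_
  calc ∫⁻ e in H \ A, g e ∂μ ≤ ∫⁻ _ in H \ A, k ∂μ :=
        setLIntegral_mono_ae (by fun_prop) (Filter.Eventually.of_forall fun e he => h1 e he.1)
    _ = k * μ (H \ A) := by rw [setLIntegral_const, mul_comm]
    _ ≤ k * μ (A \ H) := mul_le_mul_right hAH k
    _ = ∫⁻ _ in A \ H, k ∂μ := by rw [setLIntegral_const, mul_comm]
    _ ≤ ∫⁻ e in A \ H, g e ∂μ :=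
        setLIntegral_mono_ae hg.aemeasurable (Filter.Eventually.of_forall fun e he => h2 e he.2)

lemma lintegral_pi_prod {n : ℕ} (m : Fin n → Measure ℝ) [∀ i, SigmaFinite (m i)]
    (f : Fin n → ℝ → ℝ≥0∞) (hf : ∀ i, Measurable (f i)) :
    ∫⁻ x : Fin n → ℝ, ∏ i, f i (x i) ∂(Measure.pi m) = ∏ i, ∫⁻ y, f i y ∂(m i) := by
  induction n with
  | zero => simp [Measure.pi_empty_univ]
  | succ n ih =>
      have hMP := (measurePreserving_piFinSuccAbove m 0).symm
      have hmeas : Measurable fun x : Fin (n+1) → ℝ => ∏ i, f i (x i) :=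
        Finset.measurable_prod _ fun i _ => (hf i).comp (measurable_pi_apply i)
      calc ∫⁻ x : Fin (n+1) → ℝ, ∏ i, f i (x i) ∂(Measure.pi m)
          = ∫⁻ p : ℝ × (Fin n → ℝ),
              (∏ i, f i ((MeasurableEquiv.piFinSuccAbove (fun _ => ℝ) 0).symm p i))
              ∂((m 0).prod (Measure.pi fun i => m (Fin.succ i))) := (hMP.lintegral_comp hmeas).symm
        _ = ∫⁻ p : ℝ × (Fin n → ℝ), f 0 p.1 * ∏ i : Fin n, f (Fin.succ i) (p.2 i)
              ∂((m 0).prod (Measure.pi fun i => m (Fin.succ i))) := by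
            congr 1
            ext p
            rw [Fin.prod_univ_succ]
            simp [MeasurableEquiv.piFinSuccAbove_symm_apply, Fin.insertNthEquiv,
              Fin.insertNth_zero, Fin.zero_succAbove]
        _ = (∫⁻ y, f 0 y ∂(m 0)) * ∏ i : Fin n, ∫⁻ y, f (Fin.succ i) y ∂(m (Fin.succ i)) := by
            have hswap := lintegral_prod_mul (μ := m 0)
              (ν := Measure.pi fun i => m (Fin.succ i)) (f := f 0)
              (g := fun y : Fin n → ℝ => ∏ i, f (Fin.succ i) (y i))
              (hf 0).aemeasurable
              (Finset.measurable_prod _ fun i _ =>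
                (hf _).comp (measurable_pi_apply i)).aemeasurable
            rw [hswap, ih (fun i => m (Fin.succ i)) (fun i => f (Fin.succ i)) (fun i => hf _)]
        _ = ∏ i, ∫⁻ y, f i y ∂(m i) := (Fin.prod_univ_succ fun i => ∫⁻ y, f i y ∂(m i)).symm

lemma gauss_shift_withDensity (v : ℝ≥0) (hv : v ≠ 0) (c : ℝ) :
    (gaussianReal 0 v).withDensity
      (fun y => ENNReal.ofReal (Real.exp ((c * y - c ^ 2 / 2) / (v : ℝ)))) = gaussianReal c v := by
  have hvR : (v : ℝ) ≠ 0 := by exact_mod_cast hv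
  rw [gaussianReal_of_var_ne_zero 0 hv, gaussianReal_of_var_ne_zero c hv,
    ← withDensity_mul _ (measurable_gaussianPDF 0 v)
      (by fun_prop : Measurable fun y => ENNReal.ofReal (Real.exp ((c * y - c ^ 2 / 2) / (v : ℝ))))]
  congr 1
  funext y
  simp only [Pi.mul_apply, gaussianPDF]
  rw [← ENNReal.ofReal_mul (gaussianPDFReal_nonneg 0 v y)]
  congr 1
  unfold gaussianPDFReal
  rw [mul_assoc, ← Real.exp_add]
  congr 1
  field_simp
  ring

lemma conv_pdf_pointwise (v1 v2 : ℝ≥0) (h1 : v1 ≠ 0) (h2 : v2 ≠ 0) (u t : ℝ) :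
    gaussianPDFReal 0 v1 t * gaussianPDFReal 0 v2 (u - t) =
      ((Real.sqrt (2 * π * v1))⁻¹ * (Real.sqrt (2 * π * v2))⁻¹
        * Real.exp (-u ^ 2 / (2 * ((v1 : ℝ) + v2))))
      * Real.exp (-(((v1 : ℝ) + v2) / (2 * (v1 : ℝ) * (v2 : ℝ)))
          * (t - (v1 : ℝ) * u / ((v1 : ℝ) + v2)) ^ 2) := by
  have hv1 : (0:ℝ) < (v1 : ℝ) := lt_of_le_of_ne (v1.coe_nonneg) (by exact_mod_cast (Ne.symm h1))
  have hv2 : (0:ℝ) < (v2 : ℝ) := lt_of_le_of_ne (v2.coe_nonneg) (by exact_mod_cast (Ne.symm h2))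
  have hw : (0:ℝ) < (v1 : ℝ) + v2 := by linarith
  unfold gaussianPDFReal
  rw [mul_mul_mul_comm]
  rw [mul_assoc ((Real.sqrt (2 * π * v1))⁻¹ * (Real.sqrt (2 * π * v2))⁻¹), ← Real.exp_add,
    ← Real.exp_add]
  congr 1
  congr 1
  field_simp
  ring

lemma conv_pdf_integrable (v1 v2 : ℝ≥0) (h1 : v1 ≠ 0) (h2 : v2 ≠ 0) (u : ℝ) :
    Integrable (fun t => gaussianPDFReal 0 v1 t * gaussianPDFReal 0 v2 (u - t)) := by
  have hv1 : (0:ℝ) < (v1 : ℝ) := lt_of_le_of_ne (v1.coe_nonneg) (by exact_mod_cast (Ne.symm h1))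
  have hv2 : (0:ℝ) < (v2 : ℝ) := lt_of_le_of_ne (v2.coe_nonneg) (by exact_mod_cast (Ne.symm h2))
  have hb : (0:ℝ) < ((v1 : ℝ) + v2) / (2 * (v1 : ℝ) * (v2 : ℝ)) := by positivity
  have : (fun t => gaussianPDFReal 0 v1 t * gaussianPDFReal 0 v2 (u - t)) =
      fun t => ((Real.sqrt (2 * π * v1))⁻¹ * (Real.sqrt (2 * π * v2))⁻¹
        * Real.exp (-u ^ 2 / (2 * ((v1 : ℝ) + v2))))
      * Real.exp (-(((v1 : ℝ) + v2) / (2 * (v1 : ℝ) * (v2 : ℝ)))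
          * (t - (v1 : ℝ) * u / ((v1 : ℝ) + v2)) ^ 2) := by
    funext t; exact conv_pdf_pointwise v1 v2 h1 h2 u t
  rw [this]
  exact (((integrable_exp_neg_mul_sq hb).comp_sub_right
    ((v1 : ℝ) * u / ((v1 : ℝ) + v2))).const_mul _)

lemma conv_pdf (v1 v2 : ℝ≥0) (h1 : v1 ≠ 0) (h2 : v2 ≠ 0) (u : ℝ) :
    (∫ t, gaussianPDFReal 0 v1 t * gaussianPDFReal 0 v2 (u - t)) =
      gaussianPDFReal 0 (v1 + v2) u := by
  have hv1 : (0:ℝ) < (v1 : ℝ) := lt_of_le_of_ne (v1.coe_nonneg) (by exact_mod_cast (Ne.symm h1))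
  have hv2 : (0:ℝ) < (v2 : ℝ) := lt_of_le_of_ne (v2.coe_nonneg) (by exact_mod_cast (Ne.symm h2))
  have hw : (0:ℝ) < (v1 : ℝ) + v2 := by linarith
  have hb : (0:ℝ) < ((v1 : ℝ) + v2) / (2 * (v1 : ℝ) * (v2 : ℝ)) := by positivity
  set b : ℝ := ((v1 : ℝ) + v2) / (2 * (v1 : ℝ) * (v2 : ℝ)) with hbdef
  set a : ℝ := (v1 : ℝ) * u / ((v1 : ℝ) + v2) with hadef
  have h0 : (fun t => gaussianPDFReal 0 v1 t * gaussianPDFReal 0 v2 (u - t)) =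
      fun t => ((Real.sqrt (2 * π * v1))⁻¹ * (Real.sqrt (2 * π * v2))⁻¹
        * Real.exp (-u ^ 2 / (2 * ((v1 : ℝ) + v2)))) * Real.exp (-b * (t - a) ^ 2) := by
    funext t; exact conv_pdf_pointwise v1 v2 h1 h2 u t
  rw [h0, integral_const_mul]
  rw [integral_sub_right_eq_self (fun t => Real.exp (-b * t ^ 2)) a, integral_gaussian]
  unfold gaussianPDFReal
  rw [NNReal.coe_add]
  have hpi : (0:ℝ) < π := Real.pi_pos
  have hconst : Real.sqrt (π / b) * (Real.sqrt (2 * π * v2))⁻¹ * (Real.sqrt (2 * π * v1))⁻¹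
      = (Real.sqrt (2 * π * ((v1 : ℝ) + v2)))⁻¹ := by
    rw [mul_comm, ← mul_assoc]
    rw [← Real.sqrt_inv, ← Real.sqrt_inv, ← Real.sqrt_mul (by positivity),
      ← Real.sqrt_mul (by positivity), ← Real.sqrt_inv]
    congr 1
    rw [hbdef]
    field_simp
  rw [show (√(2 * π * ↑v1))⁻¹ * (√(2 * π * ↑v2))⁻¹ * rexp (-u ^ 2 / (2 * ((v1:ℝ) + ↑v2)))
        * √(π / b) = (√(π / b) * (√(2 * π * ↑v2))⁻¹ * (√(2 * π * ↑v1))⁻¹)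
        * rexp (-u ^ 2 / (2 * ((v1:ℝ) + ↑v2))) by ring, hconst, sub_zero]

lemma gauss_conv (v1 v2 : ℝ≥0) :
    Measure.map (fun p : ℝ × ℝ => p.1 + p.2) ((gaussianReal 0 v1).prod (gaussianReal 0 v2)) =
      gaussianReal 0 (v1 + v2) := by
  by_cases h1 : v1 = 0
  · subst h1
    rw [gaussianReal_zero_var, Measure.dirac_prod, zero_add,
      Measure.map_map (by fun_prop) (by fun_prop)]
    have : ((fun p : ℝ × ℝ => p.1 + p.2) ∘ Prod.mk 0) = fun y : ℝ => y := by
      funext y; simp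
    rw [this]; exact Measure.map_id
  by_cases h2 : v2 = 0
  · subst h2
    rw [gaussianReal_zero_var, Measure.prod_dirac, add_zero,
      Measure.map_map (by fun_prop) (by fun_prop)]
    have : ((fun p : ℝ × ℝ => p.1 + p.2) ∘ fun x : ℝ => (x, (0:ℝ))) = fun y : ℝ => y := by
      funext y; simp
    rw [this]; exact Measure.map_id
  have h12 : v1 + v2 ≠ 0 := by simp [h1]
  have hpdf2 : Measurable fun p : ℝ × ℝ => gaussianPDF p.1 v2 p.2 := by
    apply Measurable.ennreal_ofReal
    unfold gaussianPDFReal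
    fun_prop
  ext s hs
  rw [Measure.map_apply (by fun_prop) hs, Measure.prod_apply (hs.preimage (by fun_prop))]
  have key : ∀ t : ℝ, (gaussianReal 0 v2)
      (Prod.mk t ⁻¹' ((fun p : ℝ × ℝ => p.1 + p.2) ⁻¹' s)) = ∫⁻ u in s, gaussianPDF t v2 u := by
    intro t
    have hpre : (Prod.mk t ⁻¹' ((fun p : ℝ × ℝ => p.1 + p.2) ⁻¹' s)) = (fun u => t + u) ⁻¹' s := by
      rfl
    rw [hpre, ← Measure.map_apply (by fun_prop) hs, gaussianReal_map_const_add, zero_add,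
      gaussianReal_apply _ h2]
  calc ∫⁻ t, (gaussianReal 0 v2) (Prod.mk t ⁻¹' ((fun p : ℝ × ℝ => p.1 + p.2) ⁻¹' s))
        ∂(gaussianReal 0 v1)
      = ∫⁻ t, (∫⁻ u in s, gaussianPDF t v2 u) ∂(gaussianReal 0 v1) :=
        lintegral_congr fun t => key t
    _ = ∫⁻ t, gaussianPDF 0 v1 t * ∫⁻ u in s, gaussianPDF t v2 u := by
        rw [gaussianReal_of_var_ne_zero 0 h1,
          lintegral_withDensity_eq_lintegral_mul _ (measurable_gaussianPDF 0 v1)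
            (Measurable.lintegral_prod_right' (f := fun p : ℝ × ℝ => gaussianPDF p.1 v2 p.2) hpdf2)]
        rfl
    _ = ∫⁻ t, ∫⁻ u in s, gaussianPDF 0 v1 t * gaussianPDF t v2 u := by
        congr 1; funext t
        rw [lintegral_const_mul _ (by fun_prop : Measurable fun u => gaussianPDF t v2 u)]
    _ = ∫⁻ u in s, ∫⁻ t, gaussianPDF 0 v1 t * gaussianPDF t v2 u := by
        refine lintegral_lintegral_swap ?_
        exact ((measurable_gaussianPDF 0 v1).comp measurable_fst |>.mul hpdf2).aemeasurable
    _ = ∫⁻ u in s, gaussianPDF 0 (v1 + v2) u := by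
        refine setLIntegral_congr_fun hs (fun u _ => ?_)
        have hsub : ∀ t : ℝ, gaussianPDF t v2 u = gaussianPDF 0 v2 (u - t) := by
          intro t; unfold gaussianPDF
          rw [gaussianPDFReal_sub, zero_add]
        simp_rw [hsub]
        unfold gaussianPDF
        have hnn : ∀ t : ℝ, 0 ≤ gaussianPDFReal 0 v1 t * gaussianPDFReal 0 v2 (u - t) :=
          fun t => mul_nonneg (gaussianPDFReal_nonneg _ _ _) (gaussianPDFReal_nonneg _ _ _)
        calc ∫⁻ t, ENNReal.ofReal (gaussianPDFReal 0 v1 t)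
              * ENNReal.ofReal (gaussianPDFReal 0 v2 (u - t))
            = ∫⁻ t, ENNReal.ofReal (gaussianPDFReal 0 v1 t * gaussianPDFReal 0 v2 (u - t)) := by
              congr 1; funext t
              rw [← ENNReal.ofReal_mul (gaussianPDFReal_nonneg _ _ _)]
          _ = ENNReal.ofReal (∫ t, gaussianPDFReal 0 v1 t * gaussianPDFReal 0 v2 (u - t)) :=
              (ofReal_integral_eq_lintegral_ofReal (conv_pdf_integrable v1 v2 h1 h2 u)
                (Filter.Eventually.of_forall hnn)).symm
          _ = ENNReal.ofReal (gaussianPDFReal 0 (v1 + v2) u) := by rw [conv_pdf v1 v2 h1 h2 u]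
    _ = gaussianReal 0 (v1 + v2) s := (gaussianReal_apply _ h12 s).symm

lemma gauss_sum_law (n : ℕ) (c : Fin n → ℝ) (V : ℝ≥0) :
    Measure.map (fun x : Fin n → ℝ => ∑ i, c i * x i)
      (Measure.pi fun _ : Fin n => gaussianReal 0 V)
      = gaussianReal 0 (Real.toNNReal (∑ i, (c i) ^ 2) * V) := by
  induction n with
  | zero =>
      simp only [Finset.univ_eq_empty, Finset.sum_empty, Real.toNNReal_zero, zero_mul,
        gaussianReal_zero_var]
      rw [Measure.map_const]
      simp
  | succ n ih =>
      have hg : Measurable fun y : Fin n → ℝ => ∑ i, c (Fin.succ i) * y i :=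
        Finset.measurable_sum _ fun i _ => (measurable_pi_apply i).const_mul _
      have hf : Measurable fun x : Fin (n+1) → ℝ => ∑ i, c i * x i :=
        Finset.measurable_sum _ fun i _ => (measurable_pi_apply i).const_mul _
      have hMP := (measurePreserving_piFinSuccAbove
        (fun _ : Fin (n+1) => gaussianReal 0 V) 0).symm
      rw [← hMP.map_eq, Measure.map_map hf (MeasurableEquiv.measurable _)]
      have hcomp : ((fun x : Fin (n+1) → ℝ => ∑ i, c i * x i)
            ∘ (MeasurableEquiv.piFinSuccAbove (fun _ : Fin (n+1) => ℝ) 0).symm)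
          = (fun p : ℝ × ℝ => p.1 + p.2)
            ∘ (Prod.map (fun a : ℝ => c 0 * a) (fun y : Fin n → ℝ => ∑ i, c (Fin.succ i) * y i)) := by
        funext p
        simp only [Function.comp_apply, MeasurableEquiv.piFinSuccAbove_symm_apply,
          Fin.insertNthEquiv, Fin.insertNth_zero, Prod.map_apply]
        rw [Fin.sum_univ_succ]
        simp [Fin.zero_succAbove]
      rw [hcomp, ← Measure.map_map (by fun_prop) (by fun_prop)]
      rw [← Measure.map_prod_map _ _ (by fun_prop : Measurable fun a : ℝ => c 0 * a) hg]
      rw [gaussianReal_map_const_mul (c 0)]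
      have hrest : (Measure.pi fun _ : Fin n =>
          gaussianReal 0 V).map (fun y : Fin n → ℝ => ∑ i, c (Fin.succ i) * y i)
          = gaussianReal 0 (Real.toNNReal (∑ i, (c (Fin.succ i)) ^ 2) * V) :=
        ih (fun i => c (Fin.succ i))
      rw [hrest, mul_zero, gauss_conv]
      congr 1
      rw [Fin.sum_univ_succ, Real.toNNReal_add (sq_nonneg _)
        (Finset.sum_nonneg fun i _ => sq_nonneg _), add_mul]
      congr 2
      ext
      simp [Real.coe_toNNReal _ (sq_nonneg (c 0))]

lemma shift_eq_withDensity (d : ℕ) (V : ℝ≥0) (hV : V ≠ 0) (δ : Fin d → ℝ) :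
    Measure.map (fun e : Fin d → ℝ => δ + e) (Measure.pi fun _ : Fin d => gaussianReal 0 V)
      = (Measure.pi fun _ : Fin d => gaussianReal 0 V).withDensity
          (fun e => ∏ i, ENNReal.ofReal (Real.exp ((δ i * e i - δ i ^ 2 / 2) / (V : ℝ)))) := by
  have hf : ∀ i : Fin d, Measurable fun y : ℝ =>
      ENNReal.ofReal (Real.exp ((δ i * y - δ i ^ 2 / 2) / (V : ℝ))) := fun i => by fun_prop
  have hadd : Measurable fun e : Fin d → ℝ => δ + e :=
    measurable_pi_lambda _ fun i => by fun_prop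
  have hprod : Measurable fun e : Fin d → ℝ =>
      ∏ i, ENNReal.ofReal (Real.exp ((δ i * e i - δ i ^ 2 / 2) / (V : ℝ))) :=
    Finset.measurable_prod _ fun i _ => (hf i).comp (measurable_pi_apply i)
  have h1 : Measure.map (fun e : Fin d → ℝ => δ + e)
      (Measure.pi fun _ : Fin d => gaussianReal 0 V)
      = Measure.pi fun i : Fin d => gaussianReal (δ i) V := by
    refine (Measure.pi_eq (μ := fun i : Fin d => gaussianReal (δ i) V) fun s hs => ?_).symm
    rw [Measure.map_apply hadd (MeasurableSet.univ_pi hs)]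
    have hpre : (fun e : Fin d → ℝ => δ + e) ⁻¹' (Set.pi univ s)
        = Set.pi univ fun i => (fun y => δ i + y) ⁻¹' (s i) := by
      ext e; simp [Set.mem_pi, Pi.add_apply]
    rw [hpre, Measure.pi_pi]
    refine Finset.prod_congr rfl fun i _ => ?_
    rw [← Measure.map_apply (by fun_prop) (hs i), gaussianReal_map_const_add, zero_add]
  have h2 : (Measure.pi fun _ : Fin d => gaussianReal 0 V).withDensity
      (fun e => ∏ i, ENNReal.ofReal (Real.exp ((δ i * e i - δ i ^ 2 / 2) / (V : ℝ))))
      = Measure.pi fun i : Fin d => gaussianReal (δ i) V := by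
    refine (Measure.pi_eq (μ := fun i : Fin d => gaussianReal (δ i) V) fun s hs => ?_).symm
    rw [withDensity_apply _ (MeasurableSet.univ_pi hs), ← lintegral_indicator
      (MeasurableSet.univ_pi hs)]
    have hind : (Set.pi univ s).indicator
        (fun e => ∏ i, ENNReal.ofReal (Real.exp ((δ i * e i - δ i ^ 2 / 2) / (V : ℝ))))
        = fun e => ∏ i, (s i).indicator
            (fun y => ENNReal.ofReal (Real.exp ((δ i * y - δ i ^ 2 / 2) / (V : ℝ)))) (e i) := by
      funext e
      by_cases he : e ∈ Set.pi univ s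
      · rw [Set.indicator_of_mem he]
        exact (Finset.prod_congr rfl fun i _ =>
          (Set.indicator_of_mem (he i (Set.mem_univ i)) (fun y => ENNReal.ofReal (Real.exp ((δ i * y - δ i ^ 2 / 2) / (V : ℝ))))).symm)
      · rw [Set.indicator_of_notMem he]
        have he' : ∃ i, e i ∉ s i := by simpa [Set.mem_pi] using he
        obtain ⟨i, hi⟩ := he'
        exact (Finset.prod_eq_zero (Finset.mem_univ i)
          (by rw [Set.indicator_of_notMem hi])).symm
    rw [hind, lintegral_pi_prod _ _ fun i => (hf i).indicator (hs i)]
    refine Finset.prod_congr rfl fun i _ => ?_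
    rw [lintegral_indicator (hs i), ← withDensity_apply _ (hs i), gauss_shift_withDensity V hV]
  rw [h1, h2]

lemma Phi_strictMono (Φ : ℝ → ℝ) (hΦ : ∀ t : ℝ, Φ t = (gaussianReal 0 1 (Iic t)).toReal)
    {a b : ℝ} (hab : a < b) : Φ a < Φ b := by
  rw [hΦ a, hΦ b]
  have hsplit : gaussianReal 0 1 (Iic b) = gaussianReal 0 1 (Iic a) + gaussianReal 0 1 (Ioc a b) := by
    rw [← measure_union (Set.Iic_disjoint_Ioc le_rfl) measurableSet_Ioc, Set.Iic_union_Ioc_eq_Iic hab.le]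
  have hpos : gaussianReal 0 1 (Ioc a b) ≠ 0 := by
    rw [gaussianReal_apply 0 one_ne_zero]
    intro h0
    have hae := (lintegral_eq_zero_iff (measurable_gaussianPDF 0 1)).mp h0
    have hfalse : ∀ᵐ x ∂(volume.restrict (Ioc a b)), False :=
      hae.mono fun x hx => (gaussianPDF_pos 0 one_ne_zero x).ne' hx
    have hbot : volume.restrict (Ioc a b) = 0 := by
      rw [← MeasureTheory.ae_eq_bot, ← Filter.eventually_false_iff_eq_bot]
      exact hfalse
    have hIoc : (volume : Measure ℝ) (Ioc a b) = 0 := by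
      rw [← Measure.restrict_apply_univ, hbot]
      simp
    rw [Real.volume_Ioc] at hIoc
    simp only [ENNReal.ofReal_eq_zero, sub_nonpos] at hIoc
    linarith
  rw [hsplit, ENNReal.toReal_add (measure_ne_top _ _) (measure_ne_top _ _)]
  have : 0 < (gaussianReal 0 1 (Ioc a b)).toReal :=
    ENNReal.toReal_pos hpos (measure_ne_top _ _)
  linarith

/-- **Randomized smoothing robustness guarantee (Cohen et al.).**
If the base classifier `F` classifies the Gaussian-perturbed input `x + ε` as `cA`
with probability at least `p̲A`, and every other class with probability at most `p̄B ≤ p̲A`,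
then for every perturbation `δ` with `‖δ‖₂ < R = (σε/2)(Φ⁻¹(p̲A) − Φ⁻¹(p̄B))`
the smoothed classifier at `x + δ` assigns strictly larger probability to `cA`
than to any other class. -/
theorem randomized_smoothing_certification
    (d m : ℕ) (hd : 1 ≤ d) (hm : 1 ≤ m)
    (F : (Fin d → ℝ) → Fin m) (hF : Measurable F)
    (σε : ℝ) (hσε : 0 < σε)
    -- `Φ` is the standard normal CDF
    (Φ : ℝ → ℝ)
    (hΦ : ∀ t : ℝ, Φ t = (gaussianReal 0 1 (Iic t)).toReal)
    -- `Φinv` is its inverse on (0,1) (the standard normal quantile function)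
    (Φinv : ℝ → ℝ)
    (hΦinv : ∀ p ∈ Ioo (0:ℝ) 1, Φ (Φinv p) = p)
    -- the isotropic Gaussian noise measure N(0, σε² I) on ℝ^d
    (μ : Measure (Fin d → ℝ))
    (hμ : μ = Measure.pi fun _ : Fin d => gaussianReal 0 (Real.toNNReal (σε ^ 2)))
    (x : Fin d → ℝ) (cA : Fin m) (pA pB : ℝ)
    (hpA : pA ∈ Ioo (0:ℝ) 1) (hpB : pB ∈ Ioo (0:ℝ) 1)
    (hAB : pB ≤ pA)
    (hlow : pA ≤ (μ {ε | F (x + ε) = cA}).toReal)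
    (hup : ∀ c : Fin m, c ≠ cA → (μ {ε | F (x + ε) = c}).toReal ≤ pB)
    (R : ℝ) (hR : R = σε / 2 * (Φinv pA - Φinv pB))
    (δ : Fin d → ℝ) (hδ : Real.sqrt (∑ i, (δ i) ^ 2) < R) :
    ∀ c : Fin m, c ≠ cA →
      (μ {ε | F (x + δ + ε) = c}).toReal < (μ {ε | F (x + δ + ε) = cA}).toReal := by
  intro c hc
  -- basic setup
  set V : ℝ≥0 := Real.toNNReal (σε ^ 2) with hVdef
  have hVR : (V : ℝ) = σε ^ 2 := Real.coe_toNNReal _ (sq_nonneg σε)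
  have hVpos : (0:ℝ) < (V : ℝ) := by rw [hVR]; positivity
  have hV : V ≠ 0 := by
    intro h
    rw [h] at hVR
    simp at hVR
    nlinarith
  subst hμ
  set μ : Measure (Fin d → ℝ) := Measure.pi fun _ : Fin d => gaussianReal 0 V with hμdef
  have hPμ : IsProbabilityMeasure μ := by infer_instance
  -- the Φinv gap is positive
  have hgap : Φinv pB < Φinv pA := by
    have h0 : (0:ℝ) ≤ Real.sqrt (∑ i, (δ i) ^ 2) := Real.sqrt_nonneg _
    have hRpos : 0 < R := lt_of_le_of_lt h0 hδ
    rw [hR] at hRpos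
    nlinarith
  have hpApB : pB < pA := by
    have := Phi_strictMono Φ hΦ hgap
    rwa [hΦinv pA hpA, hΦinv pB hpB] at this
  -- measurability of base sets
  have haddx : ∀ y : Fin d → ℝ, Measurable fun e : Fin d → ℝ => y + e := fun y =>
    measurable_pi_lambda _ fun i => by fun_prop
  have hmset : ∀ cc : Fin m, MeasurableSet {e : Fin d → ℝ | F (x + e) = cc} := fun cc =>
    (hF.comp (haddx x)) (measurableSet_singleton cc)
  set A : Set (Fin d → ℝ) := {e | F (x + e) = cA} with hAdef
  set B : Set (Fin d → ℝ) := {e | F (x + e) = c} with hBdef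
  -- the shifted measure
  set ν : Measure (Fin d → ℝ) := Measure.map (fun e => δ + e) μ with hνdef
  have hPν : IsProbabilityMeasure ν := Measure.isProbabilityMeasure_map (haddx δ).aemeasurable
  have htarget : ∀ cc : Fin m,
      (μ {ε | F (x + δ + ε) = cc}) = ν {e | F (x + e) = cc} := by
    intro cc
    rw [hνdef, Measure.map_apply (haddx δ) (hmset cc)]
    congr 1
    ext e
    simp [add_assoc]
  rw [htarget c, htarget cA, ← hAdef, ← hBdef]
  -- handle δ = 0
  set s2 : ℝ := ∑ i, (δ i) ^ 2 with hs2def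
  have hs2nn : 0 ≤ s2 := Finset.sum_nonneg fun i _ => sq_nonneg _
  rcases eq_or_lt_of_le hs2nn with hs20 | hs2pos
  · -- δ = 0
    have hδ0 : δ = 0 := by
      funext i
      have h2 := (Finset.sum_eq_zero_iff_of_nonneg (fun i _ => sq_nonneg (δ i))).mp hs20.symm
        i (Finset.mem_univ i)
      exact pow_eq_zero_iff two_ne_zero |>.mp h2
    have hν : ν = μ := by
      rw [hνdef, hδ0]
      have : (fun e : Fin d → ℝ => (0:Fin d → ℝ) + e) = id := by funext e; simp
      rw [this, Measure.map_id]
    rw [hν]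
    calc (μ B).toReal ≤ pB := hup c hc
      _ < pA := hpApB
      _ ≤ (μ A).toReal := hlow
  · -- main case
    have hs2 : s2 ≠ 0 := hs2pos.ne'
    set r : ℝ := Real.sqrt s2 with hrdef
    have hr : 0 < r := Real.sqrt_pos.mpr hs2pos
    have hr2 : r ^ 2 = s2 := Real.sq_sqrt hs2nn
    set cκ : ℝ := r * σε with hcκdef
    have hcκ : 0 < cκ := mul_pos hr hσε
    set T : (Fin d → ℝ) → ℝ := fun e => ∑ i, δ i * e i with hTdef
    have hT : Measurable T :=
      Finset.measurable_sum _ fun i _ => (measurable_pi_apply i).const_mul _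
    set W : ℝ≥0 := Real.toNNReal s2 * V with hWdef
    have hlaw : μ.map T = gaussianReal 0 W := gauss_sum_law d δ V
    have hcκ2 : cκ ^ 2 = (W : ℝ) := by
      rw [hcκdef, NNReal.coe_mul, Real.coe_toNNReal _ hs2nn, hVR, ← hr2]
      ring
    -- halfspace measures
    have hmapIic : ∀ cc : ℝ, cc ≠ 0 → (gaussianReal 0 1).map (fun y => cc * y)
        = gaussianReal 0 ⟨cc ^ 2, sq_nonneg cc⟩ := by
      intro cc _
      rw [gaussianReal_map_const_mul cc, mul_zero, mul_one]
      congr 1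
    have hWeq : ∀ cc : ℝ, cc ^ 2 = (W:ℝ) → (⟨cc ^ 2, sq_nonneg cc⟩ : ℝ≥0) = W := by
      intro cc h; ext; simpa using h
    have hmIic : ∀ t : ℝ, (μ (T ⁻¹' Iic t)).toReal = Φ (t / cκ) := by
      intro t
      rw [← Measure.map_apply hT measurableSet_Iic, hlaw, ← hWeq cκ hcκ2,
        ← hmapIic cκ hcκ.ne', Measure.map_apply (by fun_prop) measurableSet_Iic]
      have : (fun y : ℝ => cκ * y) ⁻¹' Iic t = Iic (t / cκ) := by
        ext y
        simp only [Set.mem_preimage, Set.mem_Iic]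
        rw [← le_div_iff₀' hcκ]
      rw [this, hΦ]
    have hmIci : ∀ t : ℝ, (μ (T ⁻¹' Ici t)).toReal = Φ (-t / cκ) := by
      intro t
      have hnc : -cκ ≠ 0 := by simpa using hcκ.ne'
      have hsq : (-cκ) ^ 2 = (W : ℝ) := by rw [neg_pow]; simpa using hcκ2
      rw [← Measure.map_apply hT measurableSet_Ici, hlaw, ← hWeq (-cκ) hsq,
        ← hmapIic (-cκ) hnc, Measure.map_apply (by fun_prop) measurableSet_Ici]
      have : (fun y : ℝ => -cκ * y) ⁻¹' Ici t = Iic (-t / cκ) := by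
        ext y
        simp only [Set.mem_preimage, Set.mem_Ici, Set.mem_Iic]
        rw [neg_mul, le_neg, ← le_div_iff₀' hcκ]
      rw [this, hΦ]
    -- shift of halfspaces under ν
    have hTshift : ∀ e : Fin d → ℝ, T (δ + e) = s2 + T e := by
      intro e
      rw [hTdef, hs2def]
      simp only [Pi.add_apply]
      rw [← Finset.sum_add_distrib]
      refine Finset.sum_congr rfl fun i _ => by ring
    have hνIic : ∀ t : ℝ, ν (T ⁻¹' Iic t) = μ (T ⁻¹' Iic (t - s2)) := by
      intro t
      rw [hνdef, Measure.map_apply (haddx δ) (hT measurableSet_Iic)]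
      congr 1
      ext e
      simp only [Set.mem_preimage, Set.mem_Iic, hTshift e]
      constructor <;> intro h <;> linarith
    have hνIci : ∀ t : ℝ, ν (T ⁻¹' Ici t) = μ (T ⁻¹' Ici (t - s2)) := by
      intro t
      rw [hνdef, Measure.map_apply (haddx δ) (hT measurableSet_Ici)]
      congr 1
      ext e
      simp only [Set.mem_preimage, Set.mem_Ici, hTshift e]
      constructor <;> intro h <;> linarith
    -- density of ν w.r.t. μ
    set g : (Fin d → ℝ) → ℝ≥0∞ :=
      fun e => ENNReal.ofReal (Real.exp ((T e - s2 / 2) / (V : ℝ))) with hgdef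
    have hg : Measurable g := by
      apply Measurable.ennreal_ofReal
      exact (Real.measurable_exp.comp ((hT.sub measurable_const).div_const _))
    have hνg : ν = μ.withDensity g := by
      rw [hνdef, hμdef, shift_eq_withDensity d V hV δ]
      congr 1
      funext e
      rw [← ENNReal.ofReal_prod_of_nonneg (fun i _ => (Real.exp_pos _).le), hgdef]
      congr 1
      rw [← Real.exp_sum]
      congr 1
      rw [← Finset.sum_div, hTdef, hs2def]
      rw [Finset.sum_sub_distrib, Finset.sum_div]
    have hmono : ∀ a b : ℝ, a ≤ b →
        ENNReal.ofReal (Real.exp ((a - s2 / 2) / (V : ℝ)))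
          ≤ ENNReal.ofReal (Real.exp ((b - s2 / 2) / (V : ℝ))) := by
      intro a b hab
      refine ENNReal.ofReal_le_ofReal (Real.exp_le_exp.mpr ?_)
      gcongr
    -- NP lower bound for A
    have hAlow : Φ (Φinv pA - r / σε) ≤ (ν A).toReal := by
      set tA : ℝ := cκ * Φinv pA with htAdef
      have hμHA : (μ (T ⁻¹' Iic tA)).toReal = pA := by
        rw [hmIic tA, htAdef, mul_div_cancel_left₀ _ hcκ.ne', hΦinv pA hpA]
      have hle : μ (T ⁻¹' Iic tA) ≤ μ A := by
        refine (ENNReal.toReal_le_toReal (measure_ne_top _ _) (measure_ne_top _ _)).mp ?_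
        rw [hμHA]
        exact hlow
      have hnp := np_core μ g hg (ENNReal.ofReal (Real.exp ((tA - s2 / 2) / (V : ℝ))))
        (T ⁻¹' Iic tA) A (hT measurableSet_Iic) (hmset cA)
        (fun e he => hmono _ _ (by exact he))
        (fun e he => hmono _ _ (le_of_not_gt fun hlt => he (le_of_lt hlt)))
        hle
      rw [← hνg] at hnp
      have h1 : (ν (T ⁻¹' Iic tA)).toReal = Φ (Φinv pA - r / σε) := by
        rw [hνIic tA, hmIic (tA - s2)]
        congr 1
        rw [htAdef, hcκdef, ← hr2]
        field_simp
      calc Φ (Φinv pA - r / σε) = (ν (T ⁻¹' Iic tA)).toReal := h1.symm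
        _ ≤ (ν A).toReal := ENNReal.toReal_mono (measure_ne_top _ _) hnp
    -- NP upper bound for B
    have hBup : (ν B).toReal ≤ Φ (Φinv pB + r / σε) := by
      set tB : ℝ := -(cκ * Φinv pB) with htBdef
      have hμKB : (μ (T ⁻¹' Ici tB)).toReal = pB := by
        rw [hmIci tB, htBdef, neg_neg, mul_div_cancel_left₀ _ hcκ.ne', hΦinv pB hpB]
      have hle : μ B ≤ μ (T ⁻¹' Ici tB) := by
        refine (ENNReal.toReal_le_toReal (measure_ne_top _ _) (measure_ne_top _ _)).mp ?_
        rw [hμKB]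
        exact hup c hc
      have hcomplset : (T ⁻¹' Ici tB)ᶜ = T ⁻¹' Iio tB := by
        rw [← Set.preimage_compl, Set.compl_Ici]
      have hlec : μ ((T ⁻¹' Ici tB)ᶜ) ≤ μ Bᶜ := by
        rw [prob_compl_eq_one_sub (hT measurableSet_Ici), prob_compl_eq_one_sub (hmset c)]
        exact tsub_le_tsub_left hle 1
      have hnp := np_core μ g hg (ENNReal.ofReal (Real.exp ((tB - s2 / 2) / (V : ℝ))))
        ((T ⁻¹' Ici tB)ᶜ) Bᶜ (hT measurableSet_Ici).compl (hmset c).compl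
        (fun e he => hmono _ _ (le_of_lt (by rw [hcomplset] at he; exact he)))
        (fun e he => hmono _ _ (by
          simp only [Set.notMem_compl_iff, Set.mem_preimage, Set.mem_Ici] at he
          exact he))
        hlec
      rw [← hνg] at hnp
      have hνB : ν B ≤ ν (T ⁻¹' Ici tB) := by
        have e1 : ν B = 1 - ν Bᶜ := by
          rw [← compl_compl B, prob_compl_eq_one_sub (hmset c).compl, compl_compl]
        have e2 : ν (T ⁻¹' Ici tB) = 1 - ν ((T ⁻¹' Ici tB)ᶜ) := by
          rw [← compl_compl (T ⁻¹' Ici tB), prob_compl_eq_one_sub (hT measurableSet_Ici).compl,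
            compl_compl]
        rw [e1, e2]
        exact tsub_le_tsub_left hnp 1
      have h1 : (ν (T ⁻¹' Ici tB)).toReal = Φ (Φinv pB + r / σε) := by
        rw [hνIci tB, hmIci (tB - s2)]
        congr 1
        rw [htBdef, hcκdef, ← hr2]
        field_simp
        ring
      calc (ν B).toReal ≤ (ν (T ⁻¹' Ici tB)).toReal :=
            ENNReal.toReal_mono (measure_ne_top _ _) hνB
        _ = Φ (Φinv pB + r / σε) := h1
    -- conclude
    have hmid : Φ (Φinv pB + r / σε) < Φ (Φinv pA - r / σε) := by
      refine Phi_strictMono Φ hΦ ?_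
      have hrR : r < R := hδ
      rw [hR] at hrR
      have : r / σε < (Φinv pA - Φinv pB) / 2 := by
        rw [div_lt_div_iff₀ hσε two_pos]
        nlinarith
      linarith
    linarith
end

section
/- Let α ∈ (0,1), let s ≥ 1 be an integer, and let n, n_s be positive integers with n_s ≥ ⌈n·(1 − log s / log α)⌉ (note log α < 0, so 1 − log s/log α ≥ 1). Then (α/s)^{1/n_s} ≥ α^{1/n}. Consequently, for every σ_ε > 0, σ_ε·Φ⁻¹((α/s)^{1/n_s}) ≥ σ_ε·Φ⁻¹(α^{1/n}); i.e., the maximum certifiable radius of an n_s-sample test at confidence level 1 − α/s is at least as large as that of an n-sample test at confidence level 1 − α. -/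
/-!
Taking logarithms, `α^{1/n} ≤ (α/s)^{1/n_s}` becomes `log α / n ≤ (log α - log s) / n_s`, and
multiplying the sample-size condition `n (1 - log s / log α) ≤ n_s` by `log α < 0` gives exactly
that. Both probabilities lie in `(0, 1)`, where `Φ⁻¹` is monotone because it is a right inverse of
the monotone function `Φ`.
-/

open MeasureTheory ProbabilityTheory Set

lemma div_le_sub_div_of_mul_one_sub_div_le {L c n N : ℝ} (hL : L < 0) (hn : 0 < n) (hN : 0 < N)
    (h : n * (1 - c / L) ≤ N) : L / n ≤ (L - c) / N := by
  rw [div_le_div_iff₀ hn hN]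
  have key := mul_le_mul_of_nonpos_right h hL.le
  rwa [mul_sub, mul_one, sub_mul, mul_assoc, div_mul_cancel₀ c hL.ne, ← mul_sub,
    mul_comm N, mul_comm n] at key

lemma Real.rpow_one_div_le_rpow_one_div_iff {a b m k : ℝ} (ha : 0 < a) (hb : 0 < b) :
    a ^ (1 / m) ≤ b ^ (1 / k) ↔ Real.log a / m ≤ Real.log b / k := by
  rw [← Real.log_le_log_iff (Real.rpow_pos_of_pos ha _) (Real.rpow_pos_of_pos hb _),
    Real.log_rpow ha, Real.log_rpow hb, one_div_mul_eq_div, one_div_mul_eq_div]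

lemma Real.rpow_mem_Ioo_zero_one {a y : ℝ} (ha : a ∈ Ioo (0 : ℝ) 1) (hy : 0 < y) :
    a ^ y ∈ Ioo (0 : ℝ) 1 :=
  ⟨Real.rpow_pos_of_pos ha.1 y, Real.rpow_lt_one ha.1.le ha.2 hy⟩

lemma div_natCast_mem_Ioo_zero_one {a : ℝ} (ha : a ∈ Ioo (0 : ℝ) 1) {s : ℕ} (hs : 1 ≤ s) :
    a / s ∈ Ioo (0 : ℝ) 1 := by
  have hs' : (1 : ℝ) ≤ s := by exact_mod_cast hs
  exact ⟨div_pos ha.1 (by linarith), (div_le_self ha.1.le hs').trans_lt ha.2⟩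

lemma monotone_of_eq_measure_Iic {Φ : ℝ → ℝ} (μ : Measure ℝ) [IsFiniteMeasure μ]
    (hΦ : ∀ t, Φ t = (μ (Iic t)).toReal) : Monotone Φ := fun a b hab => by
  rw [hΦ a, hΦ b]
  exact ENNReal.toReal_mono (measure_ne_top _ _) (measure_mono (Iic_subset_Iic.mpr hab))

lemma Monotone.monotoneOn_of_rightInvOn {α β : Type*} [LinearOrder α] [LinearOrder β]
    {f : α → β} {g : β → α} {S : Set β} (hf : Monotone f) (hfg : ∀ p ∈ S, f (g p) = p) :
    MonotoneOn g S := by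
  intro x hx y hy hxy
  rcases hxy.eq_or_lt with rfl | hlt
  · rfl
  · exact (hf.reflect_lt (by rwa [hfg x hx, hfg y hy])).le

/-- **Preserving the maximum certifiable radius under Bonferroni correction.**
If `n_s ≥ ⌈n·(1 − log s / log α)⌉` then `(α/s)^{1/n_s} ≥ α^{1/n}`, and consequently
the maximum certifiable radius `σε·Φ⁻¹((α/s)^{1/n_s})` of an `n_s`-sample test at
confidence `1 − α/s` is at least as large as the radius `σε·Φ⁻¹(α^{1/n})` of an
`n`-sample test at confidence `1 − α`. -/
theorem certifyAdp_max_radius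
    (α : ℝ) (hα : α ∈ Ioo (0:ℝ) 1) (s : ℕ) (hs : 1 ≤ s)
    (n ns : ℕ) (hn : 0 < n) (hns0 : 0 < ns)
    (hns : ⌈(n : ℝ) * (1 - Real.log s / Real.log α)⌉₊ ≤ ns)
    (σε : ℝ) (hσε : 0 < σε)
    -- `Φ` is the standard normal CDF
    (Φ : ℝ → ℝ)
    (hΦ : ∀ t : ℝ, Φ t = (gaussianReal 0 1 (Iic t)).toReal)
    -- `Φinv` is its inverse on (0,1) (the standard normal quantile function)
    (Φinv : ℝ → ℝ)
    (hΦinv : ∀ p ∈ Ioo (0:ℝ) 1, Φ (Φinv p) = p) :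
    α ^ ((1 : ℝ) / n) ≤ (α / s) ^ ((1 : ℝ) / ns) ∧
    σε * Φinv (α ^ ((1 : ℝ) / n)) ≤ σε * Φinv ((α / s) ^ ((1 : ℝ) / ns)) := by
  have hαs := div_natCast_mem_Ioo_zero_one hα hs
  have hnR : (0 : ℝ) < n := by exact_mod_cast hn
  have hnsR : (0 : ℝ) < ns := by exact_mod_cast hns0
  have hlog : Real.log α / n ≤ Real.log (α / s) / ns := by
    rw [Real.log_div hα.1.ne' (by exact_mod_cast (by omega : s ≠ 0))]
    exact div_le_sub_div_of_mul_one_sub_div_le (Real.log_neg hα.1 hα.2) hnR hnsR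
      ((Nat.le_ceil _).trans (by exact_mod_cast hns))
  have hprob : α ^ ((1 : ℝ) / n) ≤ (α / s) ^ ((1 : ℝ) / ns) :=
    (Real.rpow_one_div_le_rpow_one_div_iff hα.1 hαs.1).mpr hlog
  refine ⟨hprob, mul_le_mul_of_nonneg_left ?_ hσε.le⟩
  exact ((monotone_of_eq_measure_Iic _ hΦ).monotoneOn_of_rightInvOn hΦinv)
    (Real.rpow_mem_Ioo_zero_one hα (by positivity))
    (Real.rpow_mem_Ioo_zero_one hαs (by positivity)) hprob
end

section
/- Let m ≥ 2, ζ_c, ζ_p ∈ [0,1], and for each i ∈ {2,…,m} let v_{c,i}, v_{p,i} ≥ 0 and c₁ − cᵢ > 0. For each positive integer k define σᵢ(k)² = ((1 + ζ_c(k−1))/k)·v_{c,i} + ((1 + ζ_p(k−1))/k)·v_{p,i} and L(k) = 1 − Σ_{i=2}^m σᵢ(k)²/(c₁ − cᵢ)². Then L(k) is nondecreasing in k, and L(k) → 1 − Σ_{i=2}^m (ζ_c·v_{c,i} + ζ_p·v_{p,i})/(c₁ − cᵢ)² as k → ∞. In particular, if ζ_c = ζ_p = 0 then L(k) = 1 −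 (1/k)·Σ_{i=2}^m (v_{c,i} + v_{p,i})/(c₁ − cᵢ)² → 1. -/
/-!
Since `(1 + ζ (k - 1)) / k = ζ + (1 - ζ) / k`, the bound splits as `L(k) = A - B / k`, where `A` is
the claimed limit and `B = Σᵢ ((1 - ζ_c) v_{c,i} + (1 - ζ_p) v_{p,i}) / (c₁ - cᵢ)²` is nonnegative
because `ζ_c, ζ_p ≤ 1`. Hence `L` increases in `k` and tends to `A`; when `ζ_c = ζ_p = 0` we get
`A = 1`.
-/

open Filter Finset

theorem one_add_mul_sub_one_div {K : Type*} [Field K] (ζ : K) {x : K} (hx : x ≠ 0) :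
    (1 + ζ * (x - 1)) / x = ζ + (1 - ζ) / x := by
  field_simp
  ring

theorem sum_correlated_variance_div {ι K : Type*} [Field K] (s : Finset ι) (ζc ζp : K) {x : K}
    (hx : x ≠ 0) (vc vp d : ι → K) :
    ∑ i ∈ s, ((1 + ζc * (x - 1)) / x * vc i + (1 + ζp * (x - 1)) / x * vp i) / d i =
      ∑ i ∈ s, (ζc * vc i + ζp * vp i) / d i +
        (∑ i ∈ s, ((1 - ζc) * vc i + (1 - ζp) * vp i) / d i) / x := by
  simp only [one_add_mul_sub_one_div _ hx, sum_div, ← sum_add_distrib]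
  refine sum_congr rfl fun i _ => ?_
  ring

theorem chebyshev_bound_monotone_in_ensemble_size_general
    (m : ℕ)
    (ζc ζp : ℝ) (hζc : ζc ∈ Set.Icc (0:ℝ) 1) (hζp : ζp ∈ Set.Icc (0:ℝ) 1)
    (vc vp : Fin (m - 1) → ℝ) (hvc : ∀ i, 0 ≤ vc i) (hvp : ∀ i, 0 ≤ vp i)
    (c1 : ℝ) (ci : Fin (m - 1) → ℝ)
    (σ2 : ℕ → Fin (m - 1) → ℝ)
    (hσ2 : ∀ (k : ℕ) (i : Fin (m - 1)),
      σ2 k i = (1 + ζc * ((k : ℝ) - 1)) / (k : ℝ) * vc i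
             + (1 + ζp * ((k : ℝ) - 1)) / (k : ℝ) * vp i)
    (L : ℕ → ℝ)
    (hL : ∀ k : ℕ, L k = 1 - ∑ i, σ2 k i / (c1 - ci i) ^ 2) :
    (∀ k l : ℕ, 1 ≤ k → k ≤ l → L k ≤ L l) ∧
    Filter.Tendsto L Filter.atTop
      (nhds (1 - ∑ i, (ζc * vc i + ζp * vp i) / (c1 - ci i) ^ 2)) ∧
    (ζc = 0 → ζp = 0 →
      (∀ k : ℕ, 1 ≤ k →
        L k = 1 - (1 / (k : ℝ)) * ∑ i, (vc i + vp i) / (c1 - ci i) ^ 2) ∧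
      Filter.Tendsto L Filter.atTop (nhds 1)) := by
  set A := 1 - ∑ i, (ζc * vc i + ζp * vp i) / (c1 - ci i) ^ 2
  set B := ∑ i, ((1 - ζc) * vc i + (1 - ζp) * vp i) / (c1 - ci i) ^ 2
  have hB : 0 ≤ B := sum_nonneg fun i _ => div_nonneg
    (add_nonneg (mul_nonneg (sub_nonneg.2 hζc.2) (hvc i)) (mul_nonneg (sub_nonneg.2 hζp.2) (hvp i)))
    (sq_nonneg _)
  have hL_eq : ∀ k : ℕ, 1 ≤ k → L k = A - B / k := fun k hk => by
    rw [hL, funext (hσ2 k), sum_correlated_variance_div _ _ _ (by positivity)]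
    ring
  have hL_tendsto : Tendsto L atTop (nhds A) := by
    have := tendsto_const_nhds (x := A).sub (tendsto_const_div_atTop_nhds_zero_nat B)
    rw [sub_zero] at this
    exact this.congr' ((eventually_ge_atTop 1).mono fun k hk => (hL_eq k hk).symm)
  refine ⟨fun k l hk hkl => ?_, hL_tendsto, fun hc hp => ?_⟩
  · rw [hL_eq k hk, hL_eq l (hk.trans hkl)]
    exact sub_le_sub_left (div_le_div_of_nonneg_left hB (by positivity) (by exact_mod_cast hkl)) A
  · subst hc hp
    simp only [A, B, zero_mul, add_zero, zero_div, sum_const_zero, sub_zero, one_mul]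
      at hL_eq hL_tendsto
    exact ⟨fun k hk => by rw [hL_eq k hk, one_div_mul_eq_div], hL_tendsto⟩

/-- **Monotonicity and limit of the Chebyshev success-probability bound in ensemble size.**
With margin variances
`σᵢ(k)² = ((1 + ζ_c(k−1))/k)·v_{c,i} + ((1 + ζ_p(k−1))/k)·v_{p,i}` and the Chebyshev
lower bound `L(k) = 1 − Σᵢ σᵢ(k)²/(c₁ − cᵢ)²` on the ensemble's success probability,
`L` is nondecreasing in `k` and tends to
`1 − Σᵢ (ζ_c v_{c,i} + ζ_p v_{p,i})/(c₁ − cᵢ)²`. In particular, if `ζ_c = ζ_p = 0`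
then `L(k) = 1 − (1/k)·Σᵢ (v_{c,i} + v_{p,i})/(c₁ − cᵢ)² → 1`. -/
theorem chebyshev_bound_monotone_in_ensemble_size
    (m : ℕ) (hm : 2 ≤ m)
    (ζc ζp : ℝ) (hζc : ζc ∈ Set.Icc (0:ℝ) 1) (hζp : ζp ∈ Set.Icc (0:ℝ) 1)
    (vc vp : Fin (m - 1) → ℝ) (hvc : ∀ i, 0 ≤ vc i) (hvp : ∀ i, 0 ≤ vp i)
    (c1 : ℝ) (ci : Fin (m - 1) → ℝ) (hpos : ∀ i, 0 < c1 - ci i)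
    (σ2 : ℕ → Fin (m - 1) → ℝ)
    (hσ2 : ∀ (k : ℕ) (i : Fin (m - 1)),
      σ2 k i = (1 + ζc * ((k : ℝ) - 1)) / (k : ℝ) * vc i
             + (1 + ζp * ((k : ℝ) - 1)) / (k : ℝ) * vp i)
    (L : ℕ → ℝ)
    (hL : ∀ k : ℕ, L k = 1 - ∑ i, σ2 k i / (c1 - ci i) ^ 2) :
    (∀ k l : ℕ, 1 ≤ k → k ≤ l → L k ≤ L l) ∧
    Filter.Tendsto L Filter.atTop
      (nhds (1 - ∑ i, (ζc * vc i + ζp * vp i) / (c1 - ci i) ^ 2)) ∧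
    (ζc = 0 → ζp = 0 →
      (∀ k : ℕ, 1 ≤ k →
        L k = 1 - (1 / (k : ℝ)) * ∑ i, (vc i + vp i) / (c1 - ci i) ^ 2) ∧
      Filter.Tendsto L Filter.atTop (nhds 1)) :=
  chebyshev_bound_monotone_in_ensemble_size_general m ζc ζp hζc hζp vc vp hvc hvp c1 ci σ2 hσ2 L hL
end
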